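/- Let G be a finite p-group with G' powerful, and let C = C_G(G'/(G')^p) be the subgroup of elements of G acting trivially on G'/(G')^p by conjugation. Then for all i, j ≥ 0, [(G')^{p^i}, C^{p^j}] ≤ (G')^{p^{i+j+1}}. -/

import Mathlib

/-- The subgroup generated by `n`-th powers of elements of `H`. -/
def subPow {G : Type*} [Group G] (H : Subgroup G) (n : ℕ) : Subgroup G :=
  Subgroup.closure ((· ^ n) '' (H : Set G))

/-- A subgroup `H` of a (finite) `p`-group is powerful if `H' ≤ H^p` for `p` odd,
or `H' ≤ H^4` for `p = 2`. -/
def IsPowerfulSubgroup (p : ℕ) {G : Type*} [Group G] (H : Subgroup G) : Prop :=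
  if p = 2 then ⁅H, H⁆ ≤ subPow H 4 else ⁅H, H⁆ ≤ subPow H p

open scoped commutatorElement

/-!
Write `Q = G'` and `Q_k` for `Q` with `X ↦ X^p` applied `k` times. Two tools drive everything.
The first is the expansion `[A^n, B] ≤ [A,B]^n [[A,B],A]` for normal `A, B`, which comes from the
collection formula `[x^n, y] = [x,y]^n [[x,y]⁻¹,x]^(n choose 2)`, valid when `[[x,y]⁻¹,x]` is
central. The second is absorption: in a finite `p`-group a normal subgroup `X` with
`X ≤ T X^p [X,G]` lies in `T`, because modulo `T` and `[X,G]` the image of `X` is abelian and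
`p`-divisible, hence trivial, so `X ≤ T [X,G]` and nilpotency finishes.

The classical argument that the `p`-th power of a powerfully embedded subgroup is again
powerfully embedded then turns `[Q, C] ≤ Q^p` into `[Q_k, C] ≤ Q_{k+1}` for all `k` (for odd `p`
because `p` divides `p choose 2`; for `p = 2` one carries `[Q_k, Q_k] ≤ Q_{k+2}` along).
Peeling one factor `p` off `C^{p^j}` at a time gives `[Q_i, C^{p^j}] ≤ Q_{i+j+1}`. Finally
`Q_k = Q^{p^k}`: as `(xy)^p ≡ x^p y^p` modulo `[Q_k, Q_k] ≤ Q_{k+2}`, absorption yields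
`Q_{k+1} ≤ Q^{p^{k+1}}`.
-/

open Subgroup

section subPow

variable {G : Type*} [Group G] {H K : Subgroup G} {n : ℕ}

theorem pow_mem_subPow {a : G} (ha : a ∈ H) (n : ℕ) : a ^ n ∈ subPow H n :=
  subset_closure ⟨a, ha, rfl⟩

theorem subPow_le (h : ∀ a ∈ H, a ^ n ∈ K) : subPow H n ≤ K :=
  (closure_le K).mpr <| by rintro _ ⟨a, ha, rfl⟩; exact h a ha

theorem subPow_mono (h : H ≤ K) (n : ℕ) : subPow H n ≤ subPow K n :=
  subPow_le fun _ ha => pow_mem_subPow (h ha) n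

theorem subPow_le_self (H : Subgroup G) (n : ℕ) : subPow H n ≤ H :=
  subPow_le fun _ ha => pow_mem ha n

@[simp]
theorem subPow_one (H : Subgroup G) : subPow H 1 = H :=
  le_antisymm (subPow_le_self H 1) fun a ha => by simpa using pow_mem_subPow ha 1

theorem subPow_mul_le (H : Subgroup G) (m n : ℕ) : subPow H (m * n) ≤ subPow (subPow H m) n :=
  subPow_le fun a ha => pow_mul a m n ▸ pow_mem_subPow (pow_mem_subPow ha m) n

theorem map_subPow {G' : Type*} [Group G'] (f : G →* G') (H : Subgroup G) (n : ℕ) :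
    (subPow H n).map f = subPow (H.map f) n := by
  simp only [subPow, MonoidHom.map_closure, coe_map, Set.image_image, map_pow]

instance subPow_normal [H.Normal] (n : ℕ) : (subPow H n).Normal :=
  normal_iff_map_conj_eq.mpr fun g => by rw [map_subPow, Normal.map_conj_eq H g]

theorem exists_pow_eq_of_mem_subPow (hK : ∀ a ∈ K, ∀ b ∈ K, Commute a b) {x : G}
    (hx : x ∈ subPow K n) : ∃ y ∈ K, y ^ n = x := by
  induction hx using closure_induction with
  | mem _ hy => exact hy
  | one => exact ⟨1, one_mem K, one_pow n⟩
  | mul _ _ _ _ hx hy =>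
    obtain ⟨a, ha, rfl⟩ := hx
    obtain ⟨b, hb, rfl⟩ := hy
    exact ⟨a * b, mul_mem ha hb, (hK a ha b hb).mul_pow n⟩
  | inv _ _ hx =>
    obtain ⟨a, ha, rfl⟩ := hx
    exact ⟨a⁻¹, inv_mem ha, inv_pow a n⟩

theorem mul_pow_mul_inv_mem_commutator {a b : G} (ha : a ∈ H) (hb : b ∈ H) (n : ℕ) :
    (a * b) ^ n * (a ^ n * b ^ n)⁻¹ ∈ ⁅H, H⁆ := by
  rw [← H.map_subtype_commutator]
  refine ⟨(⟨a, ha⟩ * ⟨b, hb⟩ : H) ^ n * ((⟨a, ha⟩ : H) ^ n * (⟨b, hb⟩ : H) ^ n)⁻¹, ?_, rfl⟩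
  rw [← Abelianization.ker_of, SetLike.mem_coe, MonoidHom.mem_ker, map_mul, map_inv, map_mul,
    map_pow, map_pow, map_pow, map_mul, mul_pow, mul_inv_cancel]

theorem subPow_subPow_le_sup_commutator (H : Subgroup G) (m n : ℕ) :
    subPow (subPow H m) n ≤ subPow H (m * n) ⊔ ⁅subPow H m, subPow H m⁆ :=
  subPow_le fun x hx => by
    induction hx using closure_induction with
    | mem _ hy =>
      obtain ⟨a, ha, rfl⟩ := hy
      exact mem_sup_left (pow_mul a m n ▸ pow_mem_subPow ha _)
    | one => simp [one_mem]
    | mul x y hx hy hxn hyn =>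
      have := mul_mem (mem_sup_right (mul_pow_mul_inv_mem_commutator hx hy n)) (mul_mem hxn hyn)
      rwa [inv_mul_cancel_right] at this
    | inv x _ hxn => simpa using inv_mem hxn

end subPow

theorem IsPowerfulSubgroup.commutator_le_subPow {p : ℕ} {G : Type*} [Group G] {H : Subgroup G}
    (hH : IsPowerfulSubgroup p H) : ⁅H, H⁆ ≤ subPow H p := by
  unfold IsPowerfulSubgroup at hH
  split_ifs at hH with hp
  · subst hp
    exact hH.trans ((subPow_mul_le H 2 2).trans (subPow_le_self _ 2))
  · exact hH

theorem IsPowerfulSubgroup.commutator_le_subPow_subPow {G : Type*} [Group G] {H : Subgroup G}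
    (hH : IsPowerfulSubgroup 2 H) : ⁅H, H⁆ ≤ subPow (subPow H 2) 2 := by
  unfold IsPowerfulSubgroup at hH
  rw [if_pos rfl] at hH
  exact hH.trans (subPow_mul_le H 2 2)

section Commutator

variable {G : Type*} [Group G]

theorem commutatorElement_pow_left {x y : G} (hw : ⁅⁅x, y⁆⁻¹, x⁆ ∈ center G) (k : ℕ) :
    ⁅x ^ k, y⁆ = ⁅x, y⁆ ^ k * ⁅⁅x, y⁆⁻¹, x⁆ ^ k.choose 2 := by
  set v := ⁅x, y⁆
  set w := ⁅v⁻¹, x⁆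
  have hwc : ∀ (m : ℕ) (g : G), Commute g (w ^ m) := fun m g =>
    (show Commute g w from mem_center_iff.mp hw g).pow_right m
  have hconj (m : ℕ) : x * v ^ m * x⁻¹ = v ^ m * w ^ m := by
    rw [← conj_pow, show x * v * x⁻¹ = v * w by simp [v, w, commutatorElement_def, mul_assoc],
      (by simpa using hwc 1 v : Commute v w).mul_pow]
  induction k with
  | zero => simp
  | succ k ih =>
    rw [pow_succ', commutatorElement_mul_left_eq_conj_mul, ih, Nat.choose_succ_succ',
      Nat.choose_one_right]
    calc x * (v ^ k * w ^ k.choose 2) * x⁻¹ * v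
        = (x * v ^ k * x⁻¹) * (x * w ^ k.choose 2 * x⁻¹) * v := by group
      _ = v ^ k * w ^ (k + k.choose 2) * v := by
          rw [hconj, (hwc _ x).eq, mul_inv_cancel_right, mul_assoc (v ^ k), ← pow_add]
      _ = v ^ (k + 1) * w ^ (k + k.choose 2) := by
          rw [mul_assoc, ← (hwc _ v).eq, ← mul_assoc, ← pow_succ]

theorem commutatorElement_pow_left_mem {M : Subgroup G} [M.Normal] {x y : G}
    (hw : ∀ g, ⁅⁅⁅x, y⁆⁻¹, x⁆, g⁆ ∈ M) {k : ℕ} (hv : ⁅x, y⁆ ^ k ∈ M)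
    (hwk : ⁅⁅x, y⁆⁻¹, x⁆ ^ k.choose 2 ∈ M) : ⁅x ^ k, y⁆ ∈ M := by
  let q := QuotientGroup.mk' M
  have hq (g : G) : g ∈ M ↔ q g = 1 := by rw [← MonoidHom.mem_ker, QuotientGroup.ker_mk']
  have hcenter : ⁅⁅q x, q y⁆⁻¹, q x⁆ ∈ center (G ⧸ M) := by
    refine mem_center_iff.mpr fun g => ?_
    obtain ⟨g, rfl⟩ := QuotientGroup.mk'_surjective M g
    have := (hq _).mp (hw g)
    simp only [map_commutatorElement, map_inv] at this
    exact (commutatorElement_eq_one_iff_commute.mp this).symm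
  rw [hq] at hv hwk ⊢
  simp only [map_commutatorElement, map_pow, map_inv] at hv hwk ⊢
  rw [commutatorElement_pow_left hcenter, hv, hwk, mul_one]

theorem commutator_closure_le {M H : Subgroup G} [M.Normal] {S : Set G}
    (h : ∀ s ∈ S, ∀ g ∈ H, ⁅s, g⁆ ∈ M) : ⁅closure S, H⁆ ≤ M := by
  rw [commutator_le]
  intro a ha g hg
  induction ha using closure_induction with
  | mem s hs => exact h s hs g hg
  | one => simp [one_mem]
  | mul x y _ _ hx hy =>
    rw [commutatorElement_mul_left_eq_conj_mul]
    exact mul_mem (Normal.conj_mem ‹_› _ hy x) hx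
  | inv x _ hx =>
    rw [commutatorElement_inv_left, ← commutatorElement_inv]
    simpa using Normal.conj_mem ‹_› _ (inv_mem hx) x⁻¹

theorem commutator_subPow_le (A B : Subgroup G) [A.Normal] [B.Normal] (n : ℕ) :
    ⁅subPow A n, B⁆ ≤ subPow ⁅A, B⁆ n ⊔ ⁅⁅A, B⁆, A⁆ := by
  refine commutator_closure_le ?_
  rintro _ ⟨a, ha, rfl⟩ b hb
  have hab := commutator_mem_commutator ha hb
  have hw : ⁅⁅a, b⁆⁻¹, a⁆ ∈ ⁅⁅A, B⁆, A⁆ := commutator_mem_commutator (inv_mem hab) ha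
  refine commutatorElement_pow_left_mem (fun g => mem_sup_right ?_)
    (mem_sup_left (pow_mem_subPow hab n)) (mem_sup_right (pow_mem hw _))
  exact commutator_le_left _ ⊤ (commutator_mem_commutator hw (mem_top g))

theorem commutator_subPow_le_of_commutator_le {N T : Subgroup G} [N.Normal] [T.Normal]
    (h : ⁅N, N⁆ ≤ T) (n : ℕ) : ⁅subPow N n, N⁆ ≤ T :=
  (commutator_subPow_le N N n).trans <| sup_le ((subPow_mono h n).trans (subPow_le_self T n))
    ((commutator_mono h le_rfl).trans (commutator_le_left T N))

theorem commutator_subPow_le_of_odd {p : ℕ} (hp : Odd p) {N M : Subgroup G} [M.Normal]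
    (hNN : ⁅N, N⁆ ≤ subPow N p) (hpp : subPow (subPow N p) p ≤ M)
    (hpow : subPow ⁅subPow N p, N⁆ p ≤ M) (hcentral : ⁅⁅subPow N p, N⁆, ⊤⁆ ≤ M) :
    ⁅subPow N p, N⁆ ≤ M := by
  refine commutator_closure_le ?_
  rintro _ ⟨u, hu, rfl⟩ m hm
  have hv : ⁅u, m⁆ ∈ subPow N p := hNN (commutator_mem_commutator hu hm)
  have hw : ⁅⁅u, m⁆⁻¹, u⁆ ∈ ⁅subPow N p, N⁆ := commutator_mem_commutator (inv_mem hv) hu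
  refine commutatorElement_pow_left_mem
    (fun g => hcentral (commutator_mem_commutator hw (mem_top g))) (hpp (pow_mem_subPow hv p)) ?_
  obtain ⟨e, rfl⟩ := hp
  have hchoose : (2 * e + 1).choose 2 = (2 * e + 1) * e := by
    rw [Nat.choose_two_right, Nat.add_sub_cancel, mul_left_comm, Nat.mul_div_cancel_left _ two_pos]
  rw [hchoose, pow_mul]
  exact pow_mem (hpow (pow_mem_subPow hw _)) e

end Commutator

section PGroup

variable {p : ℕ} [Fact p.Prime] {G : Type*} [Group G] [Finite G]

theorem IsPGroup.eq_bot_of_le_subPow_of_commute (hG : IsPGroup p G) {K : Subgroup G}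
    (hK : ∀ a ∈ K, ∀ b ∈ K, Commute a b) (h : K ≤ subPow K p) : K = ⊥ := by
  have hroot (m : ℕ) : ∀ x ∈ K, ∃ y ∈ K, y ^ p ^ m = x := by
    induction m with
    | zero => exact fun x hx => ⟨x, hx, by simp⟩
    | succ m ih =>
      intro x hx
      obtain ⟨y, hy, rfl⟩ := ih x hx
      obtain ⟨z, hz, rfl⟩ := exists_pow_eq_of_mem_subPow hK (h hy)
      exact ⟨z, hz, by rw [← pow_mul, ← pow_succ']⟩
  obtain ⟨m, hm⟩ := IsPGroup.iff_card.mp hG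
  refine eq_bot_iff.mpr fun x hx => ?_
  obtain ⟨y, -, rfl⟩ := hroot m x hx
  rw [mem_bot, ← hm]
  exact pow_card_eq_one'

theorem IsPGroup.eq_bot_of_le_subPow_sup_commutator (hG : IsPGroup p G) {K : Subgroup G}
    [K.Normal] (h : K ≤ subPow K p ⊔ ⁅K, ⊤⁆) : K = ⊥ := by
  have hKG : K ≤ ⁅K, ⊤⁆ := by
    let q := QuotientGroup.mk' ⁅K, (⊤ : Subgroup G)⁆
    have hq : (⁅K, ⊤⁆ : Subgroup G).map q = ⊥ := by
      rw [Subgroup.map_eq_bot_iff, QuotientGroup.ker_mk']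
    have hcenter : K.map q ≤ center _ := by
      rw [← commutator_top_right_eq_bot_iff_le_center,
        ← map_top_of_surjective q (QuotientGroup.mk'_surjective _), ← map_commutator, hq]
    have hpow : K.map q ≤ subPow (K.map q) p := by
      calc K.map q ≤ (subPow K p ⊔ ⁅K, ⊤⁆).map q := map_mono h
        _ = subPow (K.map q) p := by rw [Subgroup.map_sup, hq, sup_bot_eq, map_subPow]
    have := (hG.to_quotient _).eq_bot_of_le_subPow_of_commute
      (fun a ha b _ => (mem_center_iff.mp (hcenter ha) b).symm) hpow
    rwa [Subgroup.map_eq_bot_iff, QuotientGroup.ker_mk'] at this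
  have hlcs (n : ℕ) : K ≤ (⊤ : Subgroup G).lowerCentralSeries n := by
    induction n with
    | zero => exact le_top
    | succ n ih => exact hKG.trans (commutator_mono ih le_rfl)
  obtain ⟨n, hn⟩ := Subgroup.nilpotent_iff_lowerCentralSeries.mp hG.isNilpotent
  exact le_bot_iff.mp (hn ▸ hlcs n)

theorem IsPGroup.le_of_le_sup_subPow_sup_commutator (hG : IsPGroup p G) {X T : Subgroup G}
    [X.Normal] [T.Normal] (h : X ≤ T ⊔ (subPow X p ⊔ ⁅X, ⊤⁆)) : X ≤ T := by
  let q := QuotientGroup.mk' T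
  have hq : T.map q = ⊥ := by rw [Subgroup.map_eq_bot_iff, QuotientGroup.ker_mk']
  have : (X.map q).Normal := Normal.map ‹_› q (QuotientGroup.mk'_surjective T)
  have hle : X.map q ≤ subPow (X.map q) p ⊔ ⁅X.map q, ⊤⁆ := by
    calc X.map q ≤ (T ⊔ (subPow X p ⊔ ⁅X, ⊤⁆)).map q := map_mono h
      _ = subPow (X.map q) p ⊔ ⁅X.map q, (⊤ : Subgroup G).map q⁆ := by
        rw [Subgroup.map_sup, Subgroup.map_sup, hq, bot_sup_eq, map_subPow, map_commutator]
      _ ≤ _ := sup_le_sup_left (commutator_mono le_rfl le_top) _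
  have := (hG.to_quotient T).eq_bot_of_le_subPow_sup_commutator hle
  rwa [Subgroup.map_eq_bot_iff, QuotientGroup.ker_mk'] at this

theorem IsPGroup.commutator_subPow_le_subPow_subPow (hG : IsPGroup p G) {N H : Subgroup G}
    [N.Normal] [H.Normal] (hNH : N ≤ H) (h1 : ⁅N, H⁆ ≤ subPow N p)
    (h2 : p = 2 → ⁅N, N⁆ ≤ subPow (subPow N p) p) :
    ⁅subPow N p, H⁆ ≤ subPow (subPow N p) p := by
  set X := ⁅subPow N p, H⁆
  refine hG.le_of_le_sup_subPow_sup_commutator ?_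
  have hNX : ⁅subPow N p, N⁆ ≤ X := commutator_mono le_rfl hNH
  have hN : ⁅subPow N p, N⁆ ≤ subPow (subPow N p) p ⊔ (subPow X p ⊔ ⁅X, ⊤⁆) := by
    rcases (Fact.out : p.Prime).eq_two_or_odd' with rfl | hodd
    · exact (commutator_subPow_le_of_commutator_le (h2 rfl) 2).trans le_sup_left
    · exact commutator_subPow_le_of_odd hodd ((commutator_mono le_rfl hNH).trans h1) le_sup_left
        ((subPow_mono hNX p).trans (le_sup_left.trans le_sup_right))
        ((commutator_mono hNX le_rfl).trans (le_sup_right.trans le_sup_right))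
  calc X ≤ subPow ⁅N, H⁆ p ⊔ ⁅⁅N, H⁆, N⁆ := commutator_subPow_le N H p
    _ ≤ _ := sup_le ((subPow_mono h1 p).trans le_sup_left) ((commutator_mono h1 le_rfl).trans hN)

theorem IsPGroup.commutator_subPow_two_le (hG : IsPGroup 2 G) {N : Subgroup G} [N.Normal]
    (h : ⁅N, N⁆ ≤ subPow (subPow N 2) 2) :
    ⁅subPow N 2, subPow N 2⁆ ≤ subPow (subPow (subPow N 2) 2) 2 := by
  have hN : ⁅subPow N 2, N⁆ ≤ subPow (subPow N 2) 2 :=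
    hG.commutator_subPow_le_subPow_subPow le_rfl (h.trans (subPow_le_self _ 2)) fun _ => h
  set Z := ⁅subPow N 2, subPow N 2⁆
  refine hG.le_of_le_sup_subPow_sup_commutator ?_
  have hA : ⁅subPow (subPow N 2) 2, subPow N 2⁆ ≤ subPow Z 2 ⊔ ⁅Z, ⊤⁆ :=
    (commutator_subPow_le _ _ 2).trans (sup_le_sup_left (commutator_mono le_rfl le_top) _)
  have hB : ⁅subPow (subPow N 2) 2, N⁆ ≤
      subPow (subPow (subPow N 2) 2) 2 ⊔ (subPow Z 2 ⊔ ⁅Z, ⊤⁆) :=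
    (commutator_subPow_le _ N 2).trans
      (sup_le_sup (subPow_mono hN 2) ((commutator_mono hN le_rfl).trans hA))
  rw [commutator_comm] at hN
  calc Z ≤ subPow ⁅N, subPow N 2⁆ 2 ⊔ ⁅⁅N, subPow N 2⁆, N⁆ := commutator_subPow_le N _ 2
    _ ≤ _ := sup_le ((subPow_mono hN 2).trans le_sup_left) ((commutator_mono hN le_rfl).trans hB)

theorem IsPGroup.subPow_subPow_le_subPow_mul (hG : IsPGroup p G) {N : Subgroup G} [N.Normal]
    {m : ℕ} (h : ⁅subPow N m, subPow N m⁆ ≤ subPow (subPow (subPow N m) p) p) :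
    subPow (subPow N m) p ≤ subPow N (m * p) :=
  hG.le_of_le_sup_subPow_sup_commutator <|
    (subPow_subPow_le_sup_commutator N m p).trans (sup_le_sup_left (h.trans le_sup_left) _)

end PGroup

section IterSubPow

variable {G : Type*} [Group G]

def iterSubPow (H : Subgroup G) (p : ℕ) : ℕ → Subgroup G
  | 0 => H
  | k + 1 => subPow (iterSubPow H p k) p

variable {N H : Subgroup G} {p : ℕ}

instance iterSubPow_normal [N.Normal] (k : ℕ) : (iterSubPow N p k).Normal := by
  induction k with
  | zero => exact ‹_›
  | succ k ih => exact subPow_normal p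

theorem iterSubPow_le_self (N : Subgroup G) (p k : ℕ) : iterSubPow N p k ≤ N := by
  induction k with
  | zero => exact le_rfl
  | succ k ih => exact (subPow_le_self _ p).trans ih

theorem commutator_iterSubPow_subPow_le [N.Normal] [H.Normal]
    (h : ∀ k, ⁅iterSubPow N p k, H⁆ ≤ iterSubPow N p (k + 1)) (i j : ℕ) :
    ⁅iterSubPow N p i, subPow H (p ^ j)⁆ ≤ iterSubPow N p (i + j + 1) := by
  induction j generalizing i with
  | zero => simpa using h i
  | succ j ih =>
    have hij := commutator_comm (iterSubPow N p i) (subPow H (p ^ j)) ▸ ih i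
    rw [commutator_comm]
    calc ⁅subPow H (p ^ (j + 1)), iterSubPow N p i⁆
        ≤ ⁅subPow (subPow H (p ^ j)) p, iterSubPow N p i⁆ :=
          commutator_mono (pow_succ p j ▸ subPow_mul_le H _ p) le_rfl
      _ ≤ subPow ⁅subPow H (p ^ j), iterSubPow N p i⁆ p ⊔
            ⁅⁅subPow H (p ^ j), iterSubPow N p i⁆, subPow H (p ^ j)⁆ :=
          commutator_subPow_le _ _ p
      _ ≤ iterSubPow N p (i + (j + 1) + 1) :=
          sup_le (subPow_mono hij p) ((commutator_mono hij (subPow_le_self H _)).trans (h _))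

theorem commutator_iterSubPow_succ_le [N.Normal] [H.Normal] (hNH : N ≤ H)
    (h : ∀ k, ⁅iterSubPow N p k, H⁆ ≤ iterSubPow N p (k + 1)) (k : ℕ) :
    ⁅iterSubPow N p (k + 1), iterSubPow N p (k + 1)⁆ ≤ iterSubPow N p (k + 3) := by
  have hle : iterSubPow N p (k + 1) ≤ subPow H (p ^ 1) := by
    rw [pow_one]
    exact subPow_mono ((iterSubPow_le_self N p k).trans hNH) p
  exact (commutator_mono le_rfl hle).trans (commutator_iterSubPow_subPow_le h (k + 1) 1)

variable [Fact p.Prime] [Finite G]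

theorem IsPGroup.commutator_iterSubPow_two_le (hG : IsPGroup 2 G) [N.Normal]
    (h : ⁅N, N⁆ ≤ subPow (subPow N 2) 2) (k : ℕ) :
    ⁅iterSubPow N 2 k, iterSubPow N 2 k⁆ ≤ iterSubPow N 2 (k + 2) := by
  induction k with
  | zero => exact h
  | succ k ih => exact hG.commutator_subPow_two_le ih

theorem IsPGroup.commutator_iterSubPow_le (hG : IsPGroup p G) [N.Normal] [H.Normal]
    (hNH : N ≤ H) (h1 : ⁅N, H⁆ ≤ subPow N p) (h2 : p = 2 → ⁅N, N⁆ ≤ subPow (subPow N p) p)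
    (k : ℕ) : ⁅iterSubPow N p k, H⁆ ≤ iterSubPow N p (k + 1) := by
  induction k with
  | zero => exact h1
  | succ k ih =>
    refine hG.commutator_subPow_le_subPow_subPow ((iterSubPow_le_self N p k).trans hNH) ih
      fun hp => ?_
    subst hp
    exact hG.commutator_iterSubPow_two_le (h2 rfl) k

theorem IsPGroup.iterSubPow_eq_subPow (hG : IsPGroup p G) [N.Normal]
    (h : ∀ k, ⁅iterSubPow N p (k + 1), iterSubPow N p (k + 1)⁆ ≤ iterSubPow N p (k + 3))
    (k : ℕ) : iterSubPow N p k = subPow N (p ^ k) := by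
  induction k with
  | zero => simp [iterSubPow]
  | succ k ih =>
    rw [iterSubPow, ih]
    refine le_antisymm ?_ (pow_succ p k ▸ subPow_mul_le N _ p)
    rcases k with _ | k
    · simp
    · refine pow_succ p (k + 1) ▸ hG.subPow_subPow_le_subPow_mul ?_
      rw [← ih]
      exact h k

end IterSubPow

/-- If `G` is a finite `p`-group with `G'` powerful and
`C = C_G(G'/(G')^p)`, then `[(G')^(p^i), C^(p^j)] ≤ (G')^(p^(i+j+1))`. -/
theorem commutator_pow_derived_centralizer
    {p : ℕ} [Fact p.Prime] {G : Type*} [Group G] [Finite G]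
    (hG : IsPGroup p G)
    (hpow : IsPowerfulSubgroup p (commutator G))
    (C : Subgroup G)
    (hC : ∀ g : G, g ∈ C ↔ ∀ a ∈ commutator G, ⁅g, a⁆ ∈ subPow (commutator G) p)
    (i j : ℕ) :
    ⁅subPow (commutator G) (p ^ i), subPow C (p ^ j)⁆ ≤
      subPow (commutator G) (p ^ (i + j + 1)) := by
  set Q := commutator G
  have hQ_le_C : Q ≤ C := fun a ha =>
    (hC a).mpr fun b hb => hpow.commutator_le_subPow (commutator_mem_commutator ha hb)
  have hQC_comm : ⁅Q, C⁆ ≤ subPow Q p := commutator_le.mpr fun a ha g hg => by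
    rw [← commutatorElement_inv]
    exact inv_mem ((hC g).mp hg a ha)
  have : C.Normal := ⟨fun g hg k => (hC _).mpr fun a ha => by
    have hconj := (hC g).mp hg _ ((inferInstance : Q.Normal).conj_mem a ha k⁻¹)
    simpa [commutatorElement_def, mul_assoc] using (subPow_normal p).conj_mem _ hconj k⟩
  have hstep := hG.commutator_iterSubPow_le hQ_le_C hQC_comm fun hp => by
    subst hp
    exact hpow.commutator_le_subPow_subPow
  have hpowers := hG.iterSubPow_eq_subPow (commutator_iterSubPow_succ_le hQ_le_C hstep)
  rw [← hpowers, ← hpowers]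
  exact commutator_iterSubPow_subPow_le hstep i j
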